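/- The reduced Suslov equations dΩ₁/dt = -(1/I₁₁)(I₁₃Ω₁ + I₂₃Ω₂ + B₃)Ω₂, dΩ₂/dt = (1/I₂₂)(I₁₃Ω₁ + I₂₃Ω₂ + B₃)Ω₁ are Hamiltonian with respect to the bracket on ℝ² defined by {F,G} = π(Ω)(∂F/∂Ω₁ ∂G/∂Ω₂ - ∂F/∂Ω₂ ∂G/∂Ω₁) with π(Ω) = -(I₁₃Ω₁ + I₂₃Ω₂ + B₃)/(I₁₁ I₂₂) and Hamiltonian H = (1/2)(I₁₁Ω₁² + I₂₂Ω₂²): explicitly, {Ω₁, H} and {Ω₂, H} equal the right-hand sides of the equations. -/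

import Mathlib

/-- The bracket on ℝ² defined by a bivector `π`:
`{F,G}(x) = π(x) (∂F/∂x₁ ∂G/∂x₂ - ∂F/∂x₂ ∂G/∂x₁)`. -/
noncomputable def pb (π F G : (Fin 2 → ℝ) → ℝ) (x : Fin 2 → ℝ) : ℝ :=
  π x * (fderiv ℝ F x (Pi.single 0 1) * fderiv ℝ G x (Pi.single 1 1)
    - fderiv ℝ F x (Pi.single 1 1) * fderiv ℝ G x (Pi.single 0 1))

section Bracket

variable (π G : (Fin 2 → ℝ) → ℝ) (x : Fin 2 → ℝ)

lemma fderiv_eval_apply {ι : Type*} [Fintype ι] (i : ι) (y v : ι → ℝ) :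
    fderiv ℝ (fun z : ι → ℝ => z i) y v = v i := by
  rw [(hasFDerivAt_apply i y).fderiv, ContinuousLinearMap.proj_apply]

lemma pb_eval_zero_left : pb π (fun y => y 0) G x = π x * fderiv ℝ G x (Pi.single 1 1) := by
  simp [pb, fderiv_eval_apply]

lemma pb_eval_one_left : pb π (fun y => y 1) G x = -(π x * fderiv ℝ G x (Pi.single 0 1)) := by
  simp [pb, fderiv_eval_apply]

end Bracket

section DiagonalQuadratic

variable (a b : ℝ) (x : Fin 2 → ℝ)

lemma hasFDerivAt_diagQuadratic :
    HasFDerivAt (fun y : Fin 2 → ℝ => (1 / 2) * (a * y 0 ^ 2 + b * y 1 ^ 2))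
      ((a * x 0) • ContinuousLinearMap.proj (R := ℝ) (φ := fun _ : Fin 2 => ℝ) 0
        + (b * x 1) • ContinuousLinearMap.proj 1) x := by
  have hsq (i : Fin 2) := (hasFDerivAt_apply (𝕜 := ℝ) (F' := fun _ => ℝ) i x).pow 2
  refine (((hsq 0).const_mul a).add ((hsq 1).const_mul b)).const_mul (1 / 2) |>.congr_fderiv ?_
  ext v
  simp
  ring

lemma fderiv_diagQuadratic_single_zero :
    fderiv ℝ (fun y : Fin 2 → ℝ => (1 / 2) * (a * y 0 ^ 2 + b * y 1 ^ 2)) x (Pi.single 0 1)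
      = a * x 0 := by
  rw [(hasFDerivAt_diagQuadratic a b x).fderiv]
  simp

lemma fderiv_diagQuadratic_single_one :
    fderiv ℝ (fun y : Fin 2 → ℝ => (1 / 2) * (a * y 0 ^ 2 + b * y 1 ^ 2)) x (Pi.single 1 1)
      = b * x 1 := by
  rw [(hasFDerivAt_diagQuadratic a b x).fderiv]
  simp

end DiagonalQuadratic

/-- The reduced Suslov equations are Hamiltonian with respect to the bracket
defined by `π(Ω) = -(I₁₃Ω₁+I₂₃Ω₂+B₃)/(I₁₁I₂₂)` and Hamiltonian
`H = ½(I₁₁Ω₁²+I₂₂Ω₂²)`: `{Ω₁,H}` and `{Ω₂,H}` equal the right-hand sides of the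
equations of motion. -/
theorem stmt3 (I11 I22 I13 I23 B3 : ℝ) (h1 : 0 < I11) (h2 : 0 < I22)
    (π H : (Fin 2 → ℝ) → ℝ)
    (hπ : ∀ x, π x = -(I13 * x 0 + I23 * x 1 + B3) / (I11 * I22))
    (hH : ∀ x, H x = (1 / 2) * (I11 * (x 0) ^ 2 + I22 * (x 1) ^ 2)) :
    ∀ x, pb π (fun y => y 0) H x = -(1 / I11) * (I13 * x 0 + I23 * x 1 + B3) * x 1
      ∧ pb π (fun y => y 1) H x = (1 / I22) * (I13 * x 0 + I23 * x 1 + B3) * x 0 := by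
  obtain rfl : H = fun y => (1 / 2) * (I11 * y 0 ^ 2 + I22 * y 1 ^ 2) := funext hH
  intro x
  rw [pb_eval_zero_left, pb_eval_one_left, fderiv_diagQuadratic_single_zero,
    fderiv_diagQuadratic_single_one, hπ]
  constructor <;> field_simp
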